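/- arXiv:1305.2458 — 4 statements merged into one kernel-verified Lean document; each statement's English description precedes it below -/
import Mathlib

section
/- Let r ≥ 1 be an integer, M > 0 a real number, and k a positive odd integer. For y ∈ [−2M√r, 2M√r] define T_k(y) := cos(k·arccos(y/(2M√r))). Then for every real y with 0 < |y| ≤ (6/5)·M√r/k, one has (1/5)·(k/(M√r)) ≤ |T_k(y)/y| ≤ k/(M√r). -/
open Real

lemma odd_cos_arccos (k : ℕ) (hodd : Odd k) (x : ℝ) :
    |Real.cos (k * Real.arccos x)| = |Real.sin (k * Real.arcsin x)| := by
  obtain ⟨m, hm⟩ := hodd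
  have h1 : (k : ℝ) * Real.arccos x = m * π - ((k : ℝ) * Real.arcsin x - π / 2) := by
    rw [Real.arccos, hm]; push_cast; ring
  rw [h1, Real.cos_nat_mul_pi_sub, abs_mul, abs_pow, abs_neg, abs_one, one_pow, one_mul,
    ← Real.cos_neg, neg_sub, Real.cos_pi_div_two_sub]

lemma cheb_helper (k : ℕ) (hk : 0 < k) (hodd : Odd k) (x : ℝ)
    (hkx : (k : ℝ) * |x| ≤ 3 / 5) :
    2 / 5 * ((k : ℝ) * |x|) ≤ |Real.cos (k * Real.arccos x)| ∧
      |Real.cos (k * Real.arccos x)| ≤ 2 * ((k : ℝ) * |x|) := by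
  have hpi : (0 : ℝ) < π := Real.pi_pos
  have hpi4 : π ≤ 4 := Real.pi_le_four
  have hkR : (0 : ℝ) < k := by exact_mod_cast hk
  have hk1 : (1 : ℝ) ≤ k := by exact_mod_cast hk
  have hx1 : |x| ≤ 3 / 5 := by nlinarith [abs_nonneg x]
  have hx1' : |x| ≤ 1 := by linarith
  have hs0 : 0 ≤ Real.arcsin |x| := Real.arcsin_nonneg.mpr (abs_nonneg x)
  have hs_lb : |x| ≤ Real.arcsin |x| := by
    have := Real.sin_le hs0
    rwa [Real.sin_arcsin (by linarith [abs_nonneg x]) hx1'] at this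
  have hs_ub : Real.arcsin |x| ≤ π / 2 * |x| := by
    rw [Real.arcsin_le_iff_le_sin' ⟨by nlinarith [abs_nonneg x], by nlinarith [abs_nonneg x]⟩]
    have h2 := Real.mul_le_sin (x := π / 2 * |x|) (by positivity)
      (by nlinarith [abs_nonneg x])
    calc |x| = 2 / π * (π / 2 * |x|) := by field_simp
      _ ≤ Real.sin (π / 2 * |x|) := h2
  have ht_lb : (k : ℝ) * |x| ≤ (k : ℝ) * Real.arcsin |x| :=
    mul_le_mul_of_nonneg_left hs_lb (le_of_lt hkR)
  have ht_ub : (k : ℝ) * Real.arcsin |x| ≤ π / 2 * ((k : ℝ) * |x|) := by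
    have := mul_le_mul_of_nonneg_left hs_ub (le_of_lt hkR); nlinarith
  have ht0 : (0 : ℝ) ≤ (k : ℝ) * Real.arcsin |x| := by positivity
  have ht2 : (k : ℝ) * Real.arcsin |x| ≤ π / 2 := by
    nlinarith [abs_nonneg x]
  have key : |Real.cos (k * Real.arccos x)| = Real.sin ((k : ℝ) * Real.arcsin |x|) := by
    rw [odd_cos_arccos k hodd]
    have hnn := Real.sin_nonneg_of_nonneg_of_le_pi ht0 (by linarith)
    rcases abs_choice x with h | h
    · rw [h] at hnn ⊢; exact abs_of_nonneg hnn
    · have hthis : Real.arcsin |x| = -Real.arcsin x := by rw [h, Real.arcsin_neg]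
      rw [hthis, mul_neg, Real.sin_neg] at hnn ⊢
      exact abs_of_nonpos (by linarith)
  rw [key]
  constructor
  · have h1 := Real.mul_le_sin ht0 ht2
    have h2 : (2 / 5 : ℝ) * ((k : ℝ) * |x|) ≤ 2 / π * ((k : ℝ) * Real.arcsin |x|) := by
      have : (2 / π : ℝ) * ((k : ℝ) * |x|) ≤ 2 / π * ((k : ℝ) * Real.arcsin |x|) :=
        mul_le_mul_of_nonneg_left ht_lb (by positivity)
      have h25 : (2 / 5 : ℝ) * ((k : ℝ) * |x|) ≤ 2 / π * ((k : ℝ) * |x|) := by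
        apply mul_le_mul_of_nonneg_right _ (by positivity)
        rw [div_le_div_iff₀ (by norm_num) hpi]; nlinarith
      linarith
    linarith
  · have h1 := Real.sin_le ht0
    nlinarith [abs_nonneg x]

/-- **Estimate for the rescaled Chebyshev polynomial near the origin
(part of Lemma 4.3 of the paper).** Let `T_k(y) = cos(k·arccos(y/(2M√r)))` be
the Chebyshev polynomial of the first kind of odd degree `k`, rescaled to
`[-2M√r, 2M√r]`. Then for `0 < |y| ≤ (6/5)·M√r/k`,
`(1/5)·k/(M√r) ≤ |T_k(y)/y| ≤ k/(M√r)`. -/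
theorem chebyshev_near_zero_estimate (r : ℕ) (hr : 1 ≤ r) (M : ℝ) (hM : 0 < M)
    (k : ℕ) (hk : 0 < k) (hodd : Odd k) (y : ℝ) (hy0 : 0 < |y|)
    (hy : |y| ≤ 6 / 5 * (M * Real.sqrt r) / k) :
    1 / 5 * ((k : ℝ) / (M * Real.sqrt r)) ≤
        |Real.cos (k * Real.arccos (y / (2 * M * Real.sqrt r))) / y| ∧
      |Real.cos (k * Real.arccos (y / (2 * M * Real.sqrt r))) / y| ≤
        (k : ℝ) / (M * Real.sqrt r) := by
  have hsr : (1 : ℝ) ≤ Real.sqrt r := by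
    rw [show (1:ℝ) = Real.sqrt 1 by simp]
    exact Real.sqrt_le_sqrt (by exact_mod_cast hr)
  obtain ⟨w, hw, hw1⟩ : ∃ w : ℝ, w = Real.sqrt r ∧ 1 ≤ w := ⟨_, rfl, hsr⟩
  rw [← hw] at hy ⊢
  have hMw : (0 : ℝ) < M * w := by positivity
  have hc : (0 : ℝ) < 2 * M * w := by positivity
  have hkR : (0 : ℝ) < k := by exact_mod_cast hk
  have hax : |y / (2 * M * w)| = |y| / (2 * M * w) := by
    rw [abs_div, abs_of_pos hc]
  have hkx : (k : ℝ) * |y / (2 * M * w)| ≤ 3 / 5 := by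
    rw [hax]
    have h1 : |y| * k ≤ 6 / 5 * (M * w) := (le_div_iff₀ hkR).mp hy
    rw [← mul_div_assoc, div_le_iff₀ hc]
    nlinarith
  obtain ⟨hlo, hhi⟩ := cheb_helper k hk hodd (y / (2 * M * w)) hkx
  rw [hax] at hlo hhi
  have habs : |Real.cos (k * Real.arccos (y / (2 * M * w))) / y|
      = |Real.cos (k * Real.arccos (y / (2 * M * w)))| / |y| := abs_div _ _
  constructor
  · rw [habs, le_div_iff₀ hy0]
    calc 1 / 5 * ((k : ℝ) / (M * w)) * |y|
        = 2 / 5 * ((k : ℝ) * (|y| / (2 * M * w))) := by field_simp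
      _ ≤ _ := hlo
  · rw [habs, div_le_iff₀ hy0]
    calc |Real.cos (k * Real.arccos (y / (2 * M * w)))|
        ≤ 2 * ((k : ℝ) * (|y| / (2 * M * w))) := hhi
      _ = (k : ℝ) / (M * w) * |y| := by field_simp
end

section
/- Let r ≥ 1 be an integer, M > 0 a real number, and k a positive odd integer. Set p := 1 + ⌊r/2⌋. For y ∈ [−2M√r, 2M√r] define T_k(y) := cos(k·arccos(y/(2M√r))), and for x ∈ ℝ^r with 0 < ‖x‖ ≤ 2M√r (Euclidean norm) define f_k(x) := (T_k(‖x‖)/‖x‖)^{2p}. Let ω := r·vol(B^r) denote the surface area of the unit (r−1)-sphere in ℝ^r, where vol(B^r) is the Lebesgue volume of the unit ball. Then for every real c with 0 < c ≤ (6/5)·M√r, (1/5)^{2p} · c^r · k^{2p − r} · ω / (r · (M√r)^{2p}) ≤ ∫_{0 < ‖x‖ ≤ c/k} f_k(x) dx ≤ c^r · k^{2p − r} · ω / (r · (M√r)^{2p}). -/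
open MeasureTheory

/-- The surface area `ω = r · vol(Bʳ)` of the unit `(r-1)`-sphere in `ℝ^r`. -/
noncomputable def unitSphereArea (r : ℕ) : ℝ :=
  r * (volume (Metric.ball (0 : EuclideanSpace ℝ (Fin r)) 1)).toReal

/-- The kernel `f_k(x) = (T_k(‖x‖)/‖x‖)^{2p}`, `p = 1 + ⌊r/2⌋`, built from the
Chebyshev polynomial `T_k(y) = cos(k·arccos(y/(2M√r)))` rescaled to
`[-2M√r, 2M√r]`. -/
noncomputable def chebKernel (r k : ℕ) (M : ℝ) (x : EuclideanSpace ℝ (Fin r)) : ℝ :=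
  (Real.cos (k * Real.arccos (‖x‖ / (2 * M * Real.sqrt r))) / ‖x‖) ^ (2 * (1 + r / 2))

/-!
Put `s = M√r` and `u = ‖x‖ / (2s)`. For odd `k`, `|T_k| = |sin (k arcsin u)|`, and on the ball
`‖x‖ ≤ c/k` the angle `θ = k arcsin u` lies in `[0, π/2]` with `k u ≤ θ ≤ (π/2) k u`. Jordan's
inequality `2θ/π ≤ sin θ ≤ θ` then traps `f_k(x)` between the constants `(k/(πs))^{2p}` and
`(πk/(4s))^{2p}`; integrating them over the punctured ball, of volume `(c/k)^r vol(Bʳ)`, and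
using `π ≤ 4 ≤ 5` gives both bounds.
-/

open Real Metric Module

namespace Real

lemma abs_cos_nat_mul_arccos_of_odd {k : ℕ} (hk : Odd k) (u : ℝ) :
    |cos (k * arccos u)| = |sin (k * arcsin u)| := by
  obtain ⟨m, rfl⟩ := hk
  have hangle : ((2 * m + 1 : ℕ) : ℝ) * arccos u =
      (π / 2 - (2 * m + 1 : ℕ) * arcsin u) + (m : ℤ) * π := by
    rw [arccos_eq_pi_div_two_sub_arcsin]; push_cast; ring
  rw [hangle, cos_add_int_mul_pi, cos_pi_div_two_sub, abs_mul, abs_zpow, abs_neg, abs_one,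
    one_zpow, one_mul]

lemma self_le_arcsin {u : ℝ} (h₀ : 0 ≤ u) (h₁ : u ≤ 1) : u ≤ arcsin u := by
  simpa [sin_arcsin (by linarith) h₁] using sin_le (arcsin_nonneg.2 h₀)

lemma arcsin_le_pi_div_two_mul {u : ℝ} (h₀ : 0 ≤ u) (h₁ : u ≤ 1) : arcsin u ≤ π / 2 * u := by
  have := mul_le_sin (arcsin_nonneg.2 h₀) (arcsin_le_pi_div_two u)
  rw [sin_arcsin (by linarith) h₁, div_mul_eq_mul_div, div_le_iff₀ pi_pos] at this
  linarith

lemma abs_cos_nat_mul_arccos_mem_Icc {k : ℕ} (hk : Odd k) {u : ℝ} (hu : 0 ≤ u)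
    (hku : k * u ≤ 1) :
    |cos (k * arccos u)| ∈ Set.Icc (2 / π * (k * u)) (π / 2 * (k * u)) := by
  have hk₁ : (1 : ℝ) ≤ k := by exact_mod_cast hk.pos
  have hu₁ : u ≤ 1 := by nlinarith
  set θ := (k : ℝ) * arcsin u
  have hθ₀ : 0 ≤ θ := mul_nonneg k.cast_nonneg (arcsin_nonneg.2 hu)
  have hθ : θ ≤ π / 2 * (k * u) :=
    calc θ ≤ k * (π / 2 * u) :=
          mul_le_mul_of_nonneg_left (arcsin_le_pi_div_two_mul hu hu₁) k.cast_nonneg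
      _ = π / 2 * (k * u) := by ring
  have hθπ : θ ≤ π / 2 := by nlinarith [pi_pos]
  have hsin : |sin θ| = sin θ :=
    abs_of_nonneg (sin_nonneg_of_nonneg_of_le_pi hθ₀ (by linarith [pi_pos]))
  rw [abs_cos_nat_mul_arccos_of_odd hk, hsin]
  constructor
  · calc 2 / π * (k * u) ≤ 2 / π * θ := by
          gcongr
          exact mul_le_mul_of_nonneg_left (self_le_arcsin hu hu₁) k.cast_nonneg
      _ ≤ sin θ := mul_le_sin hθ₀ hθπ
  · exact (sin_le hθ₀).trans hθ

end Real

lemma setIntegral_mem_Icc_of_mem_Icc {α : Type*} [MeasurableSpace α] {μ : Measure α}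
    {s : Set α} {f : α → ℝ} {a b : ℝ} (hs : MeasurableSet s) (hμs : μ s ≠ ⊤)
    (hf : AEStronglyMeasurable f μ) (hab : ∀ x ∈ s, f x ∈ Set.Icc a b) :
    ∫ x in s, f x ∂μ ∈ Set.Icc (a * μ.real s) (b * μ.real s) := by
  have hint : IntegrableOn f s μ :=
    Measure.integrableOn_of_bounded hμs hf (M := max |a| |b|) <|
      ae_restrict_of_forall_mem hs fun x hx => abs_le_max_abs_abs (hab x hx).1 (hab x hx).2
  refine ⟨setIntegral_ge_of_const_le_real hs hμs (fun x hx => (hab x hx).1) hint, ?_⟩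
  calc ∫ x in s, f x ∂μ ≤ ∫ _ in s, b ∂μ :=
        setIntegral_mono_on hint (integrableOn_const hμs) hs fun x hx => (hab x hx).2
    _ = b * μ.real s := by rw [setIntegral_const, smul_eq_mul, mul_comm]

lemma addHaar_real_closedBall_diff_singleton {E : Type*} [NormedAddCommGroup E]
    [NormedSpace ℝ E] [MeasurableSpace E] [BorelSpace E] [FiniteDimensional ℝ E] [Nontrivial E]
    (μ : Measure E) [μ.IsAddHaarMeasure] (x : E) {ρ : ℝ} (hρ : 0 ≤ ρ) :
    μ.real (closedBall x ρ \ {x}) = ρ ^ finrank ℝ E * μ.real (ball 0 1) := by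
  rw [measureReal_def, measure_sdiff_null (measure_singleton x), ← measureReal_def,
    Measure.addHaar_real_closedBall μ x hρ]

lemma measurable_chebKernel (r k : ℕ) (M : ℝ) : Measurable (chebKernel r k M) := by
  unfold chebKernel; fun_prop

lemma chebKernel_mem_Icc {r k : ℕ} (hk : Odd k) {M : ℝ} (hs : 0 < M * √r)
    {x : EuclideanSpace ℝ (Fin r)} (hx₀ : 0 < ‖x‖) (hx : k * ‖x‖ ≤ 2 * (M * √r)) :
    chebKernel r k M x ∈ Set.Icc ((k / (π * (M * √r))) ^ (2 * (1 + r / 2)))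
      ((π * k / (4 * (M * √r))) ^ (2 * (1 + r / 2))) := by
  set s := M * √r
  have hu : k * (‖x‖ / (2 * s)) ≤ 1 := by
    rw [← mul_div_assoc, div_le_one (by positivity)]; exact hx
  obtain ⟨hlo, hhi⟩ := abs_cos_nat_mul_arccos_mem_Icc hk (by positivity) hu
  have hker : chebKernel r k M x =
      (|cos (k * arccos (‖x‖ / (2 * s)))| / ‖x‖) ^ (2 * (1 + r / 2)) := by
    rw [chebKernel, ← abs_of_pos hx₀, ← abs_div, (even_two_mul _).pow_abs, abs_of_pos hx₀,
      mul_assoc]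
  rw [hker]
  constructor
  · apply pow_le_pow_left₀ (by positivity)
    rw [le_div_iff₀ hx₀]
    convert hlo using 1
    field_simp
  · apply pow_le_pow_left₀ (by positivity)
    rw [div_le_iff₀ hx₀]
    convert hhi using 1
    field_simp
    ring

lemma setIntegral_chebKernel_mem_Icc {r k : ℕ} (hr : 1 ≤ r) (hk : Odd k) {M c : ℝ}
    (hs : 0 < M * √r) (hc₀ : 0 ≤ c) (hc : c ≤ 2 * (M * √r)) :
    ∫ x in {x : EuclideanSpace ℝ (Fin r) | 0 < ‖x‖ ∧ ‖x‖ ≤ c / k}, chebKernel r k M x ∈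
      Set.Icc
        ((k / (π * (M * √r))) ^ (2 * (1 + r / 2)) *
          ((c / k) ^ r * volume.real (ball (0 : EuclideanSpace ℝ (Fin r)) 1)))
        ((π * k / (4 * (M * √r))) ^ (2 * (1 + r / 2)) *
          ((c / k) ^ r * volume.real (ball (0 : EuclideanSpace ℝ (Fin r)) 1))) := by
  have hk₀ : (0 : ℝ) < k := by exact_mod_cast hk.pos
  have : Nontrivial (EuclideanSpace ℝ (Fin r)) :=
    Module.nontrivial_of_finrank_pos (R := ℝ) (by rw [finrank_euclideanSpace_fin]; exact hr)
  have hA : {x : EuclideanSpace ℝ (Fin r) | 0 < ‖x‖ ∧ ‖x‖ ≤ c / k} =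
      closedBall 0 (c / k) \ {0} := by
    ext x; simp [and_comm]
  have hvol := addHaar_real_closedBall_diff_singleton volume
    (0 : EuclideanSpace ℝ (Fin r)) (by positivity : 0 ≤ c / k)
  rw [finrank_euclideanSpace_fin] at hvol
  rw [hA, ← hvol]
  refine setIntegral_mem_Icc_of_mem_Icc (measurableSet_closedBall.diff (measurableSet_singleton 0))
    (measure_ne_top_of_subset Set.sdiff_subset (measure_closedBall_lt_top (μ := volume)).ne)
    (measurable_chebKernel r k M).aestronglyMeasurable ?_
  rintro x ⟨hxc, hx₀⟩
  refine chebKernel_mem_Icc hk hs (norm_pos_iff.2 hx₀) ?_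
  rw [mem_closedBall_zero_iff, le_div_iff₀ hk₀] at hxc
  linarith

theorem chebyshev_kernel_mass_near_zero_general (r : ℕ) (hr : 1 ≤ r) (M : ℝ) (hM : 0 < M)
    (k : ℕ) (hodd : Odd k) (c : ℝ) (hc0 : 0 < c)
    (hc : c ≤ 6 / 5 * (M * Real.sqrt r)) :
    (1 / 5 : ℝ) ^ (2 * (1 + r / 2)) * c ^ r * (k : ℝ) ^ (2 * (1 + r / 2) - r) *
        unitSphereArea r / (r * (M * Real.sqrt r) ^ (2 * (1 + r / 2))) ≤
      (∫ x in {x : EuclideanSpace ℝ (Fin r) | 0 < ‖x‖ ∧ ‖x‖ ≤ c / k},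
        chebKernel r k M x) ∧
    (∫ x in {x : EuclideanSpace ℝ (Fin r) | 0 < ‖x‖ ∧ ‖x‖ ≤ c / k},
        chebKernel r k M x) ≤
      c ^ r * (k : ℝ) ^ (2 * (1 + r / 2) - r) * unitSphereArea r /
        (r * (M * Real.sqrt r) ^ (2 * (1 + r / 2))) := by
  have hr₀ : (0 : ℝ) < r := by exact_mod_cast hr
  have hk₀ : (0 : ℝ) < k := by exact_mod_cast hodd.pos
  have hs : 0 < M * √r := by positivity
  obtain ⟨hlower, hupper⟩ := setIntegral_chebKernel_mem_Icc hr hodd hs hc0.le (by linarith)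
  set n := 2 * (1 + r / 2)
  set s := M * √r
  set V := volume.real (ball (0 : EuclideanSpace ℝ (Fin r)) 1)
  have hscale : c ^ r * (k : ℝ) ^ (n - r) * unitSphereArea r / (r * s ^ n) =
      (k / s) ^ n * ((c / k) ^ r * V) := by
    have hω : unitSphereArea r = r * V := rfl
    rw [hω, pow_sub₀ _ hk₀.ne' (by omega), div_pow, div_pow]
    field_simp
  have hπ₅ : 1 / 5 * (k / s) ≤ k / (π * s) :=
    calc 1 / 5 * (k / s) = k / (5 * s) := by ring
      _ ≤ k / (π * s) := by gcongr; linarith [pi_le_four]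
  have hπ₄ : π * k / (4 * s) ≤ k / s :=
    calc π * k / (4 * s) = π / 4 * (k / s) := by ring
      _ ≤ 1 * (k / s) := by gcongr; exact (div_le_one four_pos).2 pi_le_four
      _ = k / s := one_mul _
  constructor
  · calc _ = (1 / 5) ^ n * (c ^ r * (k : ℝ) ^ (n - r) * unitSphereArea r / (r * s ^ n)) := by
          ring
      _ = (1 / 5 * (k / s)) ^ n * ((c / k) ^ r * V) := by rw [hscale]; ring
      _ ≤ (k / (π * s)) ^ n * ((c / k) ^ r * V) := by gcongr
      _ ≤ _ := hlower
  · calc _ ≤ (π * k / (4 * s)) ^ n * ((c / k) ^ r * V) := hupper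
      _ ≤ (k / s) ^ n * ((c / k) ^ r * V) := by gcongr
      _ = _ := hscale.symm

/-- **Concentration of the Chebyshev kernel near the origin (Lemma 4.3 (i) of
the paper).** With `p = 1 + ⌊r/2⌋`, `ω` the surface area of the unit
`(r-1)`-sphere, and `k` a positive odd integer, for every `0 < c ≤ (6/5)M√r`,
`(1/5)^{2p} c^r k^{2p-r} ω / (r (M√r)^{2p}) ≤ ∫_{0<‖x‖≤c/k} f_k
  ≤ c^r k^{2p-r} ω / (r (M√r)^{2p})`. -/
theorem chebyshev_kernel_mass_near_zero (r : ℕ) (hr : 1 ≤ r) (M : ℝ) (hM : 0 < M)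
    (k : ℕ) (hk : 0 < k) (hodd : Odd k) (c : ℝ) (hc0 : 0 < c)
    (hc : c ≤ 6 / 5 * (M * Real.sqrt r)) :
    (1 / 5 : ℝ) ^ (2 * (1 + r / 2)) * c ^ r * (k : ℝ) ^ (2 * (1 + r / 2) - r) *
        unitSphereArea r / (r * (M * Real.sqrt r) ^ (2 * (1 + r / 2))) ≤
      (∫ x in {x : EuclideanSpace ℝ (Fin r) | 0 < ‖x‖ ∧ ‖x‖ ≤ c / k},
        chebKernel r k M x) ∧
    (∫ x in {x : EuclideanSpace ℝ (Fin r) | 0 < ‖x‖ ∧ ‖x‖ ≤ c / k},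
        chebKernel r k M x) ≤
      c ^ r * (k : ℝ) ^ (2 * (1 + r / 2) - r) * unitSphereArea r /
        (r * (M * Real.sqrt r) ^ (2 * (1 + r / 2))) :=
  chebyshev_kernel_mass_near_zero_general r hr M hM k hodd c hc0 hc
end

section
/- Let r ≥ 1 be an integer, M > 0 a real number, and k a positive odd integer. Set p := 1 + ⌊r/2⌋. For y ∈ [−2M√r, 2M√r] define T_k(y) := cos(k·arccos(y/(2M√r))), and for x ∈ ℝ^r with 0 < ‖x‖ ≤ 2M√r (Euclidean norm) define f_k(x) := (T_k(‖x‖)/‖x‖)^{2p}. Let ω := r·vol(B^r) denote the surface area of the unit (r−1)-sphere in ℝ^r. Then for every real t with 0 < t ≤ 2M√r, ∫_{t ≤ ‖x‖ ≤ 2M√r} f_k(x) dx ≤ 2·ω·t^{r − 2p}. (Note r − 2p < 0.) -/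
open MeasureTheory

/-!
Since `|T_k| ≤ 1`, the kernel is dominated by `‖x‖^{-2p}`. In polar coordinates the mass of
`‖x‖^{-2p}` on the annulus `t ≤ ‖x‖ ≤ R` is `ω ∫_t^R y^{r-1-2p} dy ≤ ω t^{r-2p} / (2p - r)`,
and `2p - r ≥ 1`.
-/

open Set Metric

theorem div_pow_le_zpow_neg_of_abs_le_one {c y : ℝ} (hc : |c| ≤ 1) (hy : 0 < y) {n : ℕ}
    (hn : Even n) : (c / y) ^ n ≤ y ^ (-(n : ℤ)) := by
  rw [zpow_neg, zpow_natCast, div_pow, div_eq_mul_inv]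
  refine mul_le_of_le_one_left (inv_nonneg.2 (pow_nonneg hy.le n)) ?_
  exact hn.pow_abs c ▸ pow_le_one₀ (abs_nonneg c) hc

theorem chebKernel_nonneg (r k : ℕ) (M : ℝ) (x : EuclideanSpace ℝ (Fin r)) :
    0 ≤ chebKernel r k M x :=
  (even_two_mul _).pow_nonneg _

theorem chebKernel_le_norm_zpow (r k : ℕ) (M : ℝ) {x : EuclideanSpace ℝ (Fin r)} (hx : x ≠ 0) :
    chebKernel r k M x ≤ ‖x‖ ^ (-((2 * (1 + r / 2) : ℕ) : ℤ)) :=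
  div_pow_le_zpow_neg_of_abs_le_one (Real.abs_cos_le_one _) (norm_pos_iff.2 hx) (even_two_mul _)

theorem integral_Icc_zpow_le_of_lt_neg_one {n : ℤ} (hn : n < -1) {t R : ℝ} (ht : 0 < t)
    (htR : t ≤ R) : ∫ y in Icc t R, y ^ n ≤ t ^ (n + 1) / -(n + 1) := by
  have h0 : (0 : ℝ) ∉ uIcc t R := fun h => ht.not_ge (uIcc_of_le htR ▸ h).1
  rw [integral_Icc_eq_integral_Ioc, ← intervalIntegral.integral_of_le htR,
    integral_zpow (Or.inr ⟨by omega, h0⟩), ← neg_div_neg_eq, neg_sub]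
  have hn' : (0 : ℝ) < -(n + 1) := by
    have : (n : ℝ) < -1 := by exact_mod_cast hn
    linarith
  gcongr
  exact sub_le_self _ (zpow_pos (ht.trans_le htR) _).le

section Polar

variable {E F : Type*} [NormedAddCommGroup E] [NormedSpace ℝ E] [FiniteDimensional ℝ E]
  [MeasurableSpace E] [BorelSpace E] [NormedAddCommGroup F] [NormedSpace ℝ F]
  (μ : Measure E) [μ.IsAddHaarMeasure]

theorem setIntegral_fun_norm_preimage_addHaar [Nontrivial E] (f : ℝ → F) {s : Set ℝ}
    (hs : MeasurableSet s) (hs0 : s ⊆ Ioi 0) :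
    ∫ x in (‖·‖) ⁻¹' s, f ‖x‖ ∂μ =
      Module.finrank ℝ E • μ.real (ball 0 1) • ∫ y in s, y ^ (Module.finrank ℝ E - 1) • f y := by
  rw [← integral_indicator (measurable_norm hs)]
  have : ((‖·‖) ⁻¹' s).indicator (fun x : E => f ‖x‖) = fun x => s.indicator f ‖x‖ := rfl
  rw [this, integral_fun_norm_addHaar μ]
  simp only [← indicator_smul]
  rw [setIntegral_indicator hs, inter_eq_self_of_subset_right hs0]

theorem integrableOn_annulus_norm_zpow (m : ℤ) {t : ℝ} (ht : 0 < t) (R : ℝ) :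
    IntegrableOn (fun x : E => ‖x‖ ^ m) {x | t ≤ ‖x‖ ∧ ‖x‖ ≤ R} μ := by
  have hclosed : IsClosed {x : E | t ≤ ‖x‖ ∧ ‖x‖ ≤ R} :=
    (isClosed_le continuous_const continuous_norm).inter
      (isClosed_le continuous_norm continuous_const)
  have hcompact : IsCompact {x : E | t ≤ ‖x‖ ∧ ‖x‖ ≤ R} :=
    (isCompact_closedBall 0 R).of_isClosed_subset hclosed
      fun x hx => mem_closedBall_zero_iff.2 hx.2
  refine ContinuousOn.integrableOn_compact hcompact ?_
  exact continuous_norm.continuousOn.zpow₀ m fun x hx => Or.inl (ht.trans_le hx.1).ne'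

theorem setIntegral_annulus_norm_zpow_le [Nontrivial E] {m : ℕ} (hm : Module.finrank ℝ E < m)
    {t R : ℝ} (ht : 0 < t) (htR : t ≤ R) :
    ∫ x in {x : E | t ≤ ‖x‖ ∧ ‖x‖ ≤ R}, ‖x‖ ^ (-(m : ℤ)) ∂μ ≤
      Module.finrank ℝ E * μ.real (ball 0 1) *
        (t ^ ((Module.finrank ℝ E : ℤ) - m) / (m - Module.finrank ℝ E)) := by
  set d := Module.finrank ℝ E
  have hd : 1 ≤ d := Module.finrank_pos
  have hIcc : Icc t R ⊆ Ioi 0 := fun y hy => ht.trans_le hy.1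
  change ∫ x in (‖·‖) ⁻¹' Icc t R, ‖x‖ ^ (-(m : ℤ)) ∂μ ≤ _
  rw [setIntegral_fun_norm_preimage_addHaar μ (· ^ (-(m : ℤ))) measurableSet_Icc hIcc,
    nsmul_eq_mul, smul_eq_mul]
  have hmerge : EqOn (fun y : ℝ => y ^ (d - 1) • y ^ (-(m : ℤ)))
      (fun y => y ^ ((d : ℤ) - 1 - m)) (Icc t R) := fun y hy => by
    simp only [smul_eq_mul]
    rw [← zpow_natCast, ← zpow_add₀ (hIcc hy).ne', Nat.cast_sub hd]
    ring_nf
  rw [setIntegral_congr_fun measurableSet_Icc hmerge, ← mul_assoc]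
  refine mul_le_mul_of_nonneg_left ?_ (mul_nonneg d.cast_nonneg measureReal_nonneg)
  refine (integral_Icc_zpow_le_of_lt_neg_one (by omega) ht htR).trans_eq ?_
  rw [show (d : ℤ) - 1 - m + 1 = d - m by ring]
  push_cast
  ring

end Polar

theorem chebyshev_kernel_mass_tail_general (r : ℕ) (hr : 1 ≤ r) (M : ℝ)
    (k : ℕ) (t : ℝ) (ht0 : 0 < t)
    (ht : t ≤ 2 * M * Real.sqrt r) :
    (∫ x in {x : EuclideanSpace ℝ (Fin r) |
        t ≤ ‖x‖ ∧ ‖x‖ ≤ 2 * M * Real.sqrt r}, chebKernel r k M x) ≤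
      2 * unitSphereArea r * t ^ ((r : ℤ) - 2 * ((1 + r / 2 : ℕ) : ℤ)) := by
  have hdim : Module.finrank ℝ (EuclideanSpace ℝ (Fin r)) = r := finrank_euclideanSpace_fin
  have : Nontrivial (EuclideanSpace ℝ (Fin r)) :=
    Module.nontrivial_of_finrank_pos (R := ℝ) (by rw [hdim]; exact hr)
  set m := 2 * (1 + r / 2)
  have hrm : r < m := by omega
  have hdominated := setIntegral_mono_of_nonneg (fun x _ => chebKernel_nonneg r k M x)
    (fun x hx => chebKernel_le_norm_zpow r k M (norm_pos_iff.1 (ht0.trans_le hx.1)))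
    (integrableOn_annulus_norm_zpow volume (-(m : ℤ)) ht0 (2 * M * Real.sqrt r))
  have hmass := setIntegral_annulus_norm_zpow_le volume (hdim ▸ hrm) ht0 ht
  have hω_def : (r : ℝ) * volume.real (ball (0 : EuclideanSpace ℝ (Fin r)) 1) =
      unitSphereArea r := rfl
  rw [hdim, hω_def] at hmass
  have hω : 0 ≤ unitSphereArea r := by unfold unitSphereArea; positivity
  have hdecay : t ^ ((r : ℤ) - m) / (m - r) ≤ 2 * t ^ ((r : ℤ) - m) := by
    have hpos := zpow_pos ht0 ((r : ℤ) - m)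
    refine (div_le_self hpos.le ?_).trans (by linarith)
    have : (r : ℝ) + 1 ≤ m := by exact_mod_cast hrm
    linarith
  have := mul_le_mul_of_nonneg_left hdecay hω
  have hexp : (r : ℤ) - 2 * ((1 + r / 2 : ℕ) : ℤ) = r - m := by push_cast [m]; ring
  rw [hexp]
  linarith

/-- **Decay of the Chebyshev kernel away from the origin (Lemma 4.3 (ii) of the
paper).** With `p = 1 + ⌊r/2⌋`, `ω` the surface area of the unit
`(r-1)`-sphere, and `k` a positive odd integer, for every `0 < t ≤ 2M√r`,
`∫_{t ≤ ‖x‖ ≤ 2M√r} f_k ≤ 2 ω t^{r-2p}` (note `r - 2p < 0`, so the exponent is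
an integer power). -/
theorem chebyshev_kernel_mass_tail (r : ℕ) (hr : 1 ≤ r) (M : ℝ) (hM : 0 < M)
    (k : ℕ) (hk : 0 < k) (hodd : Odd k) (t : ℝ) (ht0 : 0 < t)
    (ht : t ≤ 2 * M * Real.sqrt r) :
    (∫ x in {x : EuclideanSpace ℝ (Fin r) |
        t ≤ ‖x‖ ∧ ‖x‖ ≤ 2 * M * Real.sqrt r}, chebKernel r k M x) ≤
      2 * unitSphereArea r * t ^ ((r : ℤ) - 2 * ((1 + r / 2 : ℕ) : ℤ)) :=
  chebyshev_kernel_mass_tail_general r hr M k t ht0 ht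
end

section
/- Let m ≥ 1 be an integer, M > 0, H : [−M,M]^m → ℝ continuous, and λ the measure on [−M,M]^m with density H with respect to Lebesgue measure. Let a_1, …, a_N ∈ [−M,M]^m, and define R(x) := (1/N)·#{1 ≤ i ≤ N : (a_i)_k ≤ x_k for all k} − λ(∏_{i=1}^m [−M, x_i]) for x ∈ [−M,M]^m. Then for every smooth function h : [−M,M]^m → ℂ that vanishes whenever some coordinate equals M (i.e. h(x) = 0 if x_i = M for some i), one has (−1)^m ∫_{[−M,M]^m} R(x) · (∂^m h/∂x_1⋯∂x_m)(x) dX = (1/N) ∑_{i=1}^N h(a_i) − ∫_{[−M,M]^m} h dλ, where dX is Lebesgue measure. -/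
open MeasureTheory Set

/-- The partial derivative of `f : ℝ^m → ℂ` in the `i`-th coordinate. -/
noncomputable def partialDerivC (m : ℕ) (i : Fin m) (f : (Fin m → ℝ) → ℂ) :
    (Fin m → ℝ) → ℂ :=
  fun x => deriv (fun t => f (Function.update x i t)) (x i)

/-- The iterated (mixed) partial derivative of `f : ℝ^m → ℂ`, taken once in each
coordinate appearing in the list `l`. -/
noncomputable def mixedPartialC (m : ℕ) (l : List (Fin m)) (f : (Fin m → ℝ) → ℂ) :
    (Fin m → ℝ) → ℂ :=
  l.foldr (partialDerivC m) f

lemma partialDerivC_eq_fderiv (m : ℕ) (i : Fin m) (f : (Fin m → ℝ) → ℂ)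
    (hf : Differentiable ℝ f) (x : Fin m → ℝ) :
    partialDerivC m i f x = fderiv ℝ f x (Pi.single i 1) := by
  have h1 : HasDerivAt (fun t => f (Function.update x i t))
      (fderiv ℝ f (Function.update x i (x i)) (Pi.single i 1)) (x i) := by
    have := (hf (Function.update x i (x i))).hasFDerivAt.comp_hasDerivAt (x i)
      (hasDerivAt_update x i (x i))
    simpa [Function.comp_def] using this
  rw [Function.update_eq_self] at h1
  exact h1.deriv

lemma contDiff_partialDerivC (m : ℕ) (i : Fin m) (f : (Fin m → ℝ) → ℂ)
    (hf : ContDiff ℝ (⊤ : ℕ∞) f) : ContDiff ℝ (⊤ : ℕ∞) (partialDerivC m i f) := by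
  have : partialDerivC m i f = fun x => fderiv ℝ f x (Pi.single i 1) := by
    funext x; exact partialDerivC_eq_fderiv m i f (hf.differentiable (by simp)) x
  rw [this]
  exact (hf.fderiv_right (le_refl _)).clm_apply contDiff_const

lemma contDiff_mixedPartialC (m : ℕ) (l : List (Fin m)) (f : (Fin m → ℝ) → ℂ)
    (hf : ContDiff ℝ (⊤ : ℕ∞) f) : ContDiff ℝ (⊤ : ℕ∞) (mixedPartialC m l f) := by
  induction l with
  | nil => exact hf
  | cons i l ih => exact contDiff_partialDerivC m i _ ih

lemma continuous_consL (m : ℕ) (y : Fin m → ℝ) : Continuous (fun s : ℝ => Fin.cons s y : ℝ → (Fin (m+1) → ℝ)) := by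
  apply continuous_pi
  intro i
  refine Fin.cases ?_ ?_ i
  · simpa using continuous_id'
  · intro j; simpa using continuous_const

lemma contDiff_consL (m : ℕ) (y : Fin m → ℝ) :
    ContDiff ℝ (⊤ : ℕ∞) (fun s : ℝ => Fin.cons s y : ℝ → (Fin (m+1) → ℝ)) := by
  have : (fun s : ℝ => Fin.cons s y : ℝ → (Fin (m+1) → ℝ))
      = fun s : ℝ => (Fin.cons 0 y : Fin (m+1) → ℝ) + s • (Fin.cons 1 0 : Fin (m+1) → ℝ) := by
    funext s; ext i
    refine Fin.cases ?_ ?_ i <;> simp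
  rw [this]
  exact contDiff_const.add (contDiff_id.smul contDiff_const)

lemma contDiff_consR (m : ℕ) (c : ℝ) :
    ContDiff ℝ (⊤ : ℕ∞) (fun y : Fin m → ℝ => (Fin.cons c y : Fin (m+1) → ℝ)) := by
  have : (fun y : Fin m → ℝ => (Fin.cons c y : Fin (m+1) → ℝ))
      = fun y => (Fin.cons c 0 : Fin (m+1) → ℝ) +
          (ContinuousLinearMap.pi (fun i : Fin (m+1) =>
            Fin.cases (0 : (Fin m → ℝ) →L[ℝ] ℝ)
              (fun j => ContinuousLinearMap.proj j) i)) y := by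
    funext y; ext i
    refine Fin.cases ?_ ?_ i <;> simp
  rw [this]
  exact contDiff_const.add (ContinuousLinearMap.contDiff _)

lemma mixedPartial_comp_cons (m : ℕ) (l : List (Fin m)) (f : (Fin (m+1) → ℝ) → ℂ) (c : ℝ) :
    mixedPartialC m l (fun y => f (Fin.cons c y))
      = fun y => mixedPartialC (m+1) (l.map Fin.succ) f (Fin.cons c y) := by
  induction l with
  | nil => rfl
  | cons i l ih =>
    funext x
    show partialDerivC m i (mixedPartialC m l fun y => f (Fin.cons c y)) x = _
    rw [ih]
    show deriv (fun t => mixedPartialC (m+1) (l.map Fin.succ) f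
        (Fin.cons c (Function.update x i t))) (x i) = _
    have h1 : ∀ t : ℝ, (Fin.cons c (Function.update x i t) : Fin (m+1) → ℝ)
        = Function.update (Fin.cons c x : Fin (m+1) → ℝ) i.succ t := fun t =>
      @Fin.cons_update m (fun _ : Fin (m+1) => ℝ) c x i t
    simp only [h1]
    show _ = partialDerivC (m+1) i.succ (mixedPartialC (m+1) (l.map Fin.succ) f) (Fin.cons c x)
    unfold partialDerivC
    rw [Fin.cons_succ]

lemma mixed_vanish (m : ℕ) (M : ℝ) (f : (Fin (m+1) → ℝ) → ℂ)
    (hf : ∀ x : Fin (m+1) → ℝ, x 0 = M → (∀ j, j ≠ 0 → x j ∈ Ioo (-M) M) → f x = 0)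
    (l : List (Fin (m+1))) (hl : (0 : Fin (m+1)) ∉ l) :
    ∀ x : Fin (m+1) → ℝ, x 0 = M → (∀ j, j ≠ 0 → x j ∈ Ioo (-M) M) →
      mixedPartialC (m+1) l f x = 0 := by
  induction l with
  | nil => exact hf
  | cons i l ih =>
    intro x hx0 hxj
    have hi : i ≠ 0 := fun hi => hl (by simp [hi])
    have hl' : (0 : Fin (m+1)) ∉ l := fun h => hl (List.mem_cons_of_mem _ h)
    show deriv (fun t => mixedPartialC (m+1) l f (Function.update x i t)) (x i) = 0
    have hev : (fun t => mixedPartialC (m+1) l f (Function.update x i t))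
        =ᶠ[nhds (x i)] fun _ => (0 : ℂ) := by
      have hmem : Ioo (-M) M ∈ nhds (x i) := isOpen_Ioo.mem_nhds (hxj i hi)
      filter_upwards [hmem] with t ht
      refine ih hl' _ ?_ ?_
      · rw [Function.update_of_ne (Ne.symm hi), hx0]
      · intro j hj
        rcases eq_or_ne j i with rfl | hji
        · simpa using ht
        · rw [Function.update_of_ne hji]; exact hxj j hj
    rw [hev.deriv_eq]
    simp

lemma setIntegral_prod_symm' {α β E : Type*} [MeasurableSpace α] [MeasurableSpace β]
    [NormedAddCommGroup E] [NormedSpace ℝ E]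
    {μ : Measure α} {ν : Measure β} [SigmaFinite μ] [SigmaFinite ν]
    (f : α × β → E) {s : Set α} {t : Set β}
    (hf : IntegrableOn f (s ×ˢ t) (μ.prod ν)) :
    ∫ z in s ×ˢ t, f z ∂μ.prod ν = ∫ y in t, ∫ x in s, f (x, y) ∂μ ∂ν := by
  have h1 : Integrable f ((μ.restrict s).prod (ν.restrict t)) := by
    rw [Measure.prod_restrict]; exact hf
  have h2 := integral_prod_symm f h1
  rw [Measure.prod_restrict] at h2
  exact h2

lemma key_ftc : ∀ (m : ℕ) (M : ℝ), 0 < M → ∀ h : (Fin m → ℝ) → ℂ, ContDiff ℝ (⊤ : ℕ∞) h →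
    (∀ x : Fin m → ℝ, (∀ i, x i ∈ Icc (-M) M) → (∃ i, x i = M) → h x = 0) →
    ∀ a : Fin m → ℝ, (∀ i, a i ∈ Icc (-M) M) →
    ∫ x in univ.pi fun i => Icc (a i) M, mixedPartialC m (List.finRange m) h x
      = (-1 : ℂ) ^ m * h a := by
  intro m
  induction m with
  | zero =>
    intro M hM h hh hvan a ha
    have hs : (univ.pi fun i : Fin 0 => Icc (a i) M) = univ := by
      ext x; simp
    rw [hs, Measure.restrict_univ]
    show ∫ x, h x = _
    rw [integral_unique]
    have huniv : (volume : Measure (Fin 0 → ℝ)) univ = 1 := by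
      rw [MeasureTheory.volume_pi, Measure.pi_univ]
      simp
    rw [measureReal_def, huniv]
    simp only [ENNReal.toReal_one, one_smul, pow_zero, one_mul]
    exact congrArg h (Subsingleton.elim _ _)
  | succ m ih =>
    intro M hM h hh hvan a ha
    set g := mixedPartialC (m+1) ((List.finRange m).map Fin.succ) h with hg_def
    have hg : ContDiff ℝ (⊤ : ℕ∞) g := contDiff_mixedPartialC _ _ _ hh
    have hD : mixedPartialC (m+1) (List.finRange (m+1)) h = partialDerivC (m+1) 0 g := by
      rw [List.finRange_succ]; rfl
    -- the measurable equivalence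
    set e := MeasurableEquiv.piFinSuccAbove (fun _ : Fin (m+1) => ℝ) 0 with he_def
    have vp : MeasurePreserving e.symm := (volume_preserving_piFinSuccAbove _ 0).symm
    have hesymm : ∀ p : ℝ × (Fin m → ℝ), e.symm p = Fin.cons p.1 p.2 := by
      intro p
      show (MeasurableEquiv.piFinSuccAbove (fun _ : Fin (m+1) => ℝ) 0).symm p = _
      rw [MeasurableEquiv.piFinSuccAbove_symm_apply]
      exact Fin.insertNth_zero' p.1 p.2
    set T : Set (Fin m → ℝ) := univ.pi fun j : Fin m => Icc (a j.succ) M with hT_def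
    have hpre : e.symm ⁻¹' (univ.pi fun i => Icc (a i) M) = Icc (a 0) M ×ˢ T := by
      rw [hT_def]
      ext p
      rw [mem_preimage, hesymm, mem_univ_pi, mem_prod, mem_univ_pi]
      constructor
      · intro hp
        exact ⟨by simpa using hp 0, fun j => by simpa using hp j.succ⟩
      · intro hp i
        refine Fin.cases ?_ (fun j => ?_) i
        · simpa using hp.1
        · simpa using hp.2 j
    have hTc : IsCompact T := isCompact_univ_pi fun _ => isCompact_Icc
    have hDc : Continuous (mixedPartialC (m+1) (List.finRange (m+1)) h) :=
      (contDiff_mixedPartialC _ _ _ hh).continuous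
    have hint : IntegrableOn (fun p : ℝ × (Fin m → ℝ) =>
        mixedPartialC (m+1) (List.finRange (m+1)) h (Fin.cons p.1 p.2))
        (Icc (a 0) M ×ˢ T) (volume.prod volume) := by
      have hcont : Continuous fun p : ℝ × (Fin m → ℝ) =>
          mixedPartialC (m+1) (List.finRange (m+1)) h (Fin.cons p.1 p.2) := by
        apply hDc.comp
        apply continuous_pi
        intro i
        refine Fin.cases ?_ ?_ i
        · simpa using continuous_fst
        · intro j; simpa [Function.comp_def] using (continuous_apply j).comp continuous_snd
      exact hcont.continuousOn.integrableOn_compact (isCompact_Icc.prod hTc)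
    calc ∫ x in univ.pi fun i => Icc (a i) M, mixedPartialC (m+1) (List.finRange (m+1)) h x
        = ∫ p in e.symm ⁻¹' (univ.pi fun i => Icc (a i) M),
            mixedPartialC (m+1) (List.finRange (m+1)) h (e.symm p) := by
          rw [vp.setIntegral_preimage_emb e.symm.measurableEmbedding]
      _ = ∫ p in Icc (a 0) M ×ˢ T,
            mixedPartialC (m+1) (List.finRange (m+1)) h (Fin.cons p.1 p.2) := by
          rw [hpre]
          exact setIntegral_congr_fun (measurableSet_Icc.prod
            (MeasurableSet.univ_pi fun _ => measurableSet_Icc))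
            (fun p _ => by rw [hesymm])
      _ = ∫ y in T, ∫ t in Icc (a 0) M,
            mixedPartialC (m+1) (List.finRange (m+1)) h (Fin.cons t y) := by
          rw [MeasureTheory.Measure.volume_eq_prod]
          exact setIntegral_prod_symm' _ hint
      _ = ∫ y in T, (g (Fin.cons M y) - g (Fin.cons (a 0) y)) := by
          apply setIntegral_congr_fun hTc.measurableSet
          intro y _
          have hφ : ContDiff ℝ (⊤ : ℕ∞) (fun s : ℝ => g (Fin.cons s y)) :=
            hg.comp (contDiff_consL m y)
          have hDy : ∀ t : ℝ, mixedPartialC (m+1) (List.finRange (m+1)) h (Fin.cons t y)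
              = deriv (fun s : ℝ => g (Fin.cons s y)) t := by
            intro t
            rw [hD]
            show deriv (fun s => g (Function.update (Fin.cons t y) 0 s)) ((Fin.cons t y : Fin (m+1) → ℝ) 0) = _
            have : ∀ s : ℝ, Function.update (Fin.cons t y : Fin (m+1) → ℝ) 0 s
                = (Fin.cons s y : Fin (m+1) → ℝ) := fun s =>
              @Fin.update_cons_zero m (fun _ : Fin (m+1) => ℝ) t y s
            simp only [this, Fin.cons_zero]
          simp only [hDy]
          rw [MeasureTheory.integral_Icc_eq_integral_Ioc,
            ← intervalIntegral.integral_of_le (ha 0).2]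
          exact intervalIntegral.integral_deriv_eq_sub
            (fun t _ => (hφ.differentiable (by simp)).differentiableAt)
            ((hφ.continuous_deriv (by simp)).intervalIntegrable _ _)
      _ = (∫ y in T, g (Fin.cons M y)) - ∫ y in T, g (Fin.cons (a 0) y) := by
          apply integral_sub
          · exact ((hg.continuous.comp (contDiff_consR m M).continuous).continuousOn).integrableOn_compact hTc
          · exact ((hg.continuous.comp (contDiff_consR m (a 0)).continuous).continuousOn).integrableOn_compact hTc
      _ = 0 - ∫ y in T, g (Fin.cons (a 0) y) := by
          congr 1
          have hnull : ∀ᵐ y : Fin m → ℝ ∂(volume.restrict T), g (Fin.cons M y) = 0 := by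
            have hbad : (volume : Measure (Fin m → ℝ))
                (⋃ j : Fin m, ({y : Fin m → ℝ | y j = M} ∪ {y | y j = -M})) = 0 := by
              rw [MeasureTheory.volume_pi]
              refine measure_iUnion_null fun j => measure_union_null ?_ ?_
              · exact Measure.pi_hyperplane (fun _ : Fin m => (volume : Measure ℝ)) j M
              · exact Measure.pi_hyperplane (fun _ : Fin m => (volume : Measure ℝ)) j (-M)
            rw [ae_restrict_iff' hTc.measurableSet]
            filter_upwards [measure_eq_zero_iff_ae_notMem.mp hbad] with y hy hyT
            have hyj : ∀ j, y j ∈ Ioo (-M) M := by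
              intro j
              have h1 : y j ∈ Icc (a j.succ) M := hyT j (mem_univ j)
              have h2 : y j ≠ M ∧ y j ≠ -M := by
                constructor <;> intro hc <;> exact hy (mem_iUnion.2 ⟨j, by simp [hc]⟩)
              exact ⟨lt_of_le_of_ne ((ha j.succ).1.trans h1.1) (Ne.symm h2.2),
                lt_of_le_of_ne h1.2 h2.1⟩
            refine mixed_vanish m M h ?_ _ ?_ _ ?_ ?_
            · intro x hx0 hxj
              refine hvan x ?_ ⟨0, hx0⟩
              intro i
              rcases eq_or_ne i 0 with rfl | hi
              · rw [hx0]; exact ⟨by linarith, le_refl M⟩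
              · exact Ioo_subset_Icc_self (hxj i hi)
            · intro hc
              rcases List.mem_map.mp hc with ⟨j, _, hj⟩
              exact (Fin.succ_ne_zero j) hj
            · simp
            · intro j hj
              rcases Fin.eq_succ_of_ne_zero hj with ⟨k, rfl⟩
              simpa using hyj k
          exact integral_eq_zero_of_ae hnull
      _ = (-1 : ℂ) ^ (m+1) * h a := by
          have hcomp : ∀ y : Fin m → ℝ, g (Fin.cons (a 0) y)
              = mixedPartialC m (List.finRange m) (fun y => h (Fin.cons (a 0) y)) y := by
            intro y
            rw [mixedPartial_comp_cons]
          simp only [hcomp]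
          rw [ih M hM (fun y => h (Fin.cons (a 0) y))
            (hh.comp (contDiff_consR m (a 0)))
            ?_ (fun j => a j.succ) (fun j => ha j.succ)]
          · have : (Fin.cons (a 0) (fun j => a j.succ) : Fin (m+1) → ℝ) = a := by
              exact Fin.cons_self_tail a
            rw [this]
            ring
          · intro y hy ⟨i, hi⟩
            refine hvan _ ?_ ⟨i.succ, by simpa using hi⟩
            intro k
            refine Fin.cases ?_ ?_ k
            · simpa using ha 0
            · intro j; simpa using hy j

/-- **Integral representation of the deviation of moments (Corollary 4.3 of the
paper).** Let `λ = H dX` be the measure with continuous density `H` on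
`[-M,M]^m`, `a_1, …, a_N ∈ [-M,M]^m`, and let
`R(x) = (1/N)·#{i : (a_i)_k ≤ x_k ∀k} - λ(∏ [-M, x_i])` be the local
discrepancy. Then for every smooth `h : [-M,M]^m → ℂ` vanishing whenever some
coordinate equals `M`,
`(-1)^m ∫_{[-M,M]^m} R(x) (∂^m h/∂x_1⋯∂x_m)(x) dX = (1/N) ∑ h(a_i) - ∫ h dλ`. -/
theorem discrepancy_integral_representation (m N : ℕ) (hm : 1 ≤ m) (hN : 0 < N)
    (M : ℝ) (hM : 0 < M)
    (H : (Fin m → ℝ) → ℝ)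
    (hH : ContinuousOn H (Set.univ.pi fun _ : Fin m => Set.Icc (-M) M))
    (a : Fin N → (Fin m → ℝ)) (ha : ∀ i k, a i k ∈ Set.Icc (-M) M)
    (h : (Fin m → ℝ) → ℂ) (hh : ContDiff ℝ (⊤ : ℕ∞) h)
    (hvan : ∀ x : Fin m → ℝ, (∀ i, x i ∈ Set.Icc (-M) M) →
      (∃ i, x i = M) → h x = 0) :
    (-1 : ℂ) ^ m *
      ∫ x in Set.univ.pi fun _ : Fin m => Set.Icc (-M) M,
        ((((Finset.univ.filter fun i : Fin N => ∀ k, a i k ≤ x k).card : ℝ) / N -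
          ∫ z in Set.univ.pi fun i => Set.Icc (-M) (x i), H z) : ℝ) •
        mixedPartialC m (List.finRange m) h x
      = (1 / (N : ℂ)) * ∑ i, h (a i)
        - ∫ z in Set.univ.pi fun _ : Fin m => Set.Icc (-M) M, H z • h z := by
  classical
  set box : Set (Fin m → ℝ) := univ.pi fun _ : Fin m => Icc (-M) M with hbox_def
  set D : (Fin m → ℝ) → ℂ := mixedPartialC m (List.finRange m) h with hD_def
  have hDc : Continuous D := (contDiff_mixedPartialC _ _ _ hh).continuous
  have hboxm : MeasurableSet box := MeasurableSet.univ_pi fun _ => measurableSet_Icc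
  have hboxc : IsCompact box := isCompact_univ_pi fun _ => isCompact_Icc
  have hDint : IntegrableOn D box := hDc.continuousOn.integrableOn_compact hboxc
  have hSmeas : ∀ z : Fin m → ℝ, MeasurableSet {x : Fin m → ℝ | ∀ k, z k ≤ x k} := by
    intro z
    have : {x : Fin m → ℝ | ∀ k, z k ≤ x k} = ⋂ k, {x : Fin m → ℝ | z k ≤ x k} := by
      ext x; simp
    rw [this]
    exact MeasurableSet.iInter fun k =>
      measurableSet_le measurable_const (measurable_pi_apply k)
  have hSmeas2 : ∀ x : Fin m → ℝ, MeasurableSet {z : Fin m → ℝ | ∀ k, z k ≤ x k} := by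
    intro x
    have : {z : Fin m → ℝ | ∀ k, z k ≤ x k} = ⋂ k, {z : Fin m → ℝ | z k ≤ x k} := by
      ext z; simp
    rw [this]
    exact MeasurableSet.iInter fun k =>
      measurableSet_le (measurable_pi_apply k) measurable_const
  have hcorner : ∀ z : Fin m → ℝ, (∀ i, z i ∈ Icc (-M) M) →
      (∫ x in box, ({x : Fin m → ℝ | ∀ k, z k ≤ x k}).indicator D x) = (-1:ℂ)^m * h z := by
    intro z hz
    rw [setIntegral_indicator (hSmeas z)]
    have hseteq : box ∩ {x : Fin m → ℝ | ∀ k, z k ≤ x k} = univ.pi fun i => Icc (z i) M := by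
      rw [hbox_def]; ext x
      simp only [mem_inter_iff, mem_univ_pi, mem_setOf_eq, mem_Icc]
      constructor
      · rintro ⟨h1, h2⟩ i; exact ⟨h2 i, (h1 i).2⟩
      · intro hx; exact ⟨fun i => ⟨(hz i).1.trans (hx i).1, (hx i).2⟩, fun i => (hx i).1⟩
    rw [hseteq]
    exact key_ftc m M hM h hh hvan z hz
  set W : Set ((Fin m → ℝ) × (Fin m → ℝ)) := {q | ∀ k, q.2 k ≤ q.1 k} with hW_def
  have hWmeas : MeasurableSet W := by
    have : W = ⋂ k, {q : (Fin m → ℝ) × (Fin m → ℝ) | q.2 k ≤ q.1 k} := by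
      rw [hW_def]; ext q; simp
    rw [this]
    refine MeasurableSet.iInter fun k => measurableSet_le ?_ ?_
    · exact (measurable_pi_apply k).comp measurable_snd
    · exact (measurable_pi_apply k).comp measurable_fst
  set Φ : ((Fin m → ℝ) × (Fin m → ℝ)) → ℂ := W.indicator (fun q => H q.2 • D q.1) with hΦ_def
  have hΦint : Integrable Φ ((volume.restrict box).prod (volume.restrict box)) := by
    apply Integrable.indicator _ hWmeas
    rw [Measure.prod_restrict]
    apply ContinuousOn.integrableOn_compact (hboxc.prod hboxc)
    exact (hH.comp continuous_snd.continuousOn (fun q hq => hq.2)).smul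
      (hDc.comp continuous_fst).continuousOn
  have hΦapp : ∀ x z : Fin m → ℝ,
      Φ (x, z) = (({z : Fin m → ℝ | ∀ k, z k ≤ x k}).indicator H z) • D x := by
    intro x z
    rw [hΦ_def]
    by_cases hzx : ∀ k, z k ≤ x k
    · rw [Set.indicator_of_mem (by exact hzx) _, Set.indicator_of_mem (by exact hzx) H]
    · rw [Set.indicator_of_notMem (by exact hzx) _,
        Set.indicator_of_notMem (by exact hzx) H, zero_smul]
  have hIx : ∀ x, x ∈ box → (∫ z in univ.pi fun i => Icc (-M) (x i), H z)
      = ∫ z in box, ({z : Fin m → ℝ | ∀ k, z k ≤ x k}).indicator H z := by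
    intro x hx
    have hseteq : (univ.pi fun i => Icc (-M) (x i))
        = box ∩ {z : Fin m → ℝ | ∀ k, z k ≤ x k} := by
      rw [hbox_def]; ext z
      simp only [mem_inter_iff, mem_univ_pi, mem_setOf_eq, mem_Icc]
      constructor
      · intro hz
        exact ⟨fun i => ⟨(hz i).1, (hz i).2.trans ((hx i (mem_univ i)).2 : x i ≤ M)⟩,
          fun k => (hz k).2⟩
      · rintro ⟨h1, h2⟩ i; exact ⟨(h1 i).1, h2 i⟩
    rw [setIntegral_indicator (hSmeas2 x), ← hseteq]
  have hΦx : ∀ x, x ∈ box → (∫ z, Φ (x, z) ∂(volume.restrict box))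
      = ((∫ z in univ.pi fun i => Icc (-M) (x i), H z) : ℝ) • D x := by
    intro x hx
    simp only [hΦapp]
    rw [integral_smul_const, ← hIx x hx]
  have hmarg : Integrable (fun x => ∫ z, Φ (x, z) ∂(volume.restrict box))
      (volume.restrict box) := hΦint.integral_prod_left
  have hIDint : IntegrableOn
      (fun x => ((∫ z in univ.pi fun i => Icc (-M) (x i), H z) : ℝ) • D x) box := by
    apply hmarg.congr
    filter_upwards [ae_restrict_mem hboxm] with x hx
    exact hΦx x hx
  have hcount : ∀ x : Fin m → ℝ,
      ((((Finset.univ.filter fun i : Fin N => ∀ k, a i k ≤ x k).card : ℝ) / N) : ℝ) • D x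
        = (N:ℝ)⁻¹ • ∑ i : Fin N, ({p : Fin m → ℝ | ∀ k, a i k ≤ p k}).indicator D x := by
    intro x
    rw [Finset.card_filter]
    push_cast
    rw [div_eq_inv_mul, mul_smul]
    congr 1
    rw [Finset.sum_smul]
    refine Finset.sum_congr rfl fun i _ => ?_
    by_cases hp : ∀ k, a i k ≤ x k
    · rw [if_pos hp, one_smul, Set.indicator_of_mem (by exact hp)]
    · rw [if_neg hp, zero_smul, Set.indicator_of_notMem (by exact hp)]
  have hCint : IntegrableOn (fun x =>
      ((((Finset.univ.filter fun i : Fin N => ∀ k, a i k ≤ x k).card : ℝ) / N) : ℝ) • D x)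
      box := by
    simp only [hcount]
    exact Integrable.smul ((N:ℝ)⁻¹) (integrable_finset_sum Finset.univ fun i _ =>
      hDint.indicator (hSmeas (a i)))
  have term1 : (∫ x in box,
      ((((Finset.univ.filter fun i : Fin N => ∀ k, a i k ≤ x k).card : ℝ) / N) : ℝ) • D x)
        = (N:ℝ)⁻¹ • ∑ i : Fin N, ((-1:ℂ)^m * h (a i)) := by
    simp only [hcount]
    rw [integral_smul]
    congr 1
    rw [integral_finset_sum _ (fun i _ => hDint.indicator (hSmeas (a i)))]
    exact Finset.sum_congr rfl fun i _ => hcorner (a i) (ha i)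
  have term2 : (∫ x in box,
      ((∫ z in univ.pi fun i => Icc (-M) (x i), H z) : ℝ) • D x)
        = (-1:ℂ)^m * ∫ z in box, H z • h z := by
    have e1 : (∫ x in box, ((∫ z in univ.pi fun i => Icc (-M) (x i), H z) : ℝ) • D x)
        = ∫ x in box, ∫ z, Φ (x, z) ∂(volume.restrict box) :=
      setIntegral_congr_fun hboxm (fun x hx => (hΦx x hx).symm)
    rw [e1]
    have hswap := integral_integral_swap (f := fun x z => Φ (x, z))
      (μ := volume.restrict box) (ν := volume.restrict box) hΦint
    rw [hswap]
    have e2 : ∀ z, z ∈ box → (∫ x, Φ (x, z) ∂(volume.restrict box))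
        = (H z) • ((-1:ℂ)^m * h z) := by
      intro z hz
      have h2 : ∀ x, Φ (x, z) = (H z) • ({x : Fin m → ℝ | ∀ k, z k ≤ x k}).indicator D x := by
        intro x
        rw [hΦapp]
        by_cases hzx : ∀ k, z k ≤ x k
        · rw [Set.indicator_of_mem (by exact hzx) H, Set.indicator_of_mem (by exact hzx) D]
        · rw [Set.indicator_of_notMem (by exact hzx) H,
            Set.indicator_of_notMem (by exact hzx) D, zero_smul, smul_zero]
      simp only [h2]
      rw [integral_smul, hcorner z (fun i => hz i (mem_univ i))]
    rw [setIntegral_congr_fun hboxm e2]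
    have e3 : ∀ z : Fin m → ℝ, (H z) • ((-1:ℂ)^m * h z) = (-1:ℂ)^m * ((H z) • h z) := by
      intro z
      rw [← smul_eq_mul, ← smul_eq_mul, smul_comm]
    simp only [e3]
    exact integral_const_mul _ _
  have hsplit : (∫ x in box,
      ((((Finset.univ.filter fun i : Fin N => ∀ k, a i k ≤ x k).card : ℝ) / N -
        ∫ z in univ.pi fun i => Icc (-M) (x i), H z) : ℝ) • D x)
      = (∫ x in box,
          ((((Finset.univ.filter fun i : Fin N => ∀ k, a i k ≤ x k).card : ℝ) / N) : ℝ) • D x)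
        - ∫ x in box, ((∫ z in univ.pi fun i => Icc (-M) (x i), H z) : ℝ) • D x := by
    rw [← integral_sub hCint hIDint]
    exact setIntegral_congr_fun hboxm fun x _ => by rw [sub_smul]
  rw [hsplit, term1, term2]
  have hpow : (-1:ℂ)^m * (-1:ℂ)^m = 1 := by rw [← mul_pow]; norm_num
  have hsum : ((N:ℝ)⁻¹ : ℝ) • ∑ i : Fin N, ((-1:ℂ)^m * h (a i))
      = ((N:ℂ))⁻¹ * ((-1:ℂ)^m * ∑ i : Fin N, h (a i)) := by
    rw [← Finset.mul_sum, Complex.real_smul]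
    push_cast
    ring
  rw [hsum]
  have hQ : ∀ Q S : ℂ, (-1:ℂ)^m * ((N:ℂ)⁻¹ * ((-1:ℂ)^m * S) - (-1:ℂ)^m * Q)
      = 1 / (N:ℂ) * S - Q := by
    intro Q S
    have : (-1:ℂ)^m * ((N:ℂ)⁻¹ * ((-1:ℂ)^m * S) - (-1:ℂ)^m * Q)
        = ((-1:ℂ)^m * (-1:ℂ)^m) * ((N:ℂ)⁻¹ * S - Q) := by ring
    rw [this, hpow, one_mul, one_div]
  exact hQ _ _
end
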